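/- arXiv:1510.08781 — 3 statements merged into one kernel-verified Lean document; each statement's English description precedes it below -/
import Mathlib

section
/- The function (g,h) ↦ sqrt(ρ(g,h)) is a complete metric on the set F = {g ∈ [ω]^ω : ρ(g,ω) < ∞}. -/
open MeasureTheory Filter Set
open scoped ENNReal

noncomputable section

/-- `fEnum x` is the increasing enumeration `f_x : ω → ω` of the set `x ∈ [ω]^ω`. -/
def fEnum (x : Set ℕ) : ℕ → ℕ := Nat.nth (· ∈ x)

/-- The sequence `α^x ∈ [1/4,3/4]^ω` attached to `x ∈ [ω]^ω`:
`α^x_n = 1/4 + 1/(2·√(f_x⁻¹(n)+1))` if `n ∈ x` and `α^x_n = 1/4` otherwise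
(for `n ∈ x`, `f_x⁻¹(n)` is the number of elements of `x` below `n`). -/
noncomputable def alphaSeq (x : Set ℕ) (n : ℕ) : ℝ :=
  haveI := Classical.decPred (· ∈ x)
  if n ∈ x then 1/4 + 1/(2 * Real.sqrt ((Nat.count (· ∈ x) n : ℝ) + 1)) else 1/4

/-- `ρ(x,y) = Σ_n (α^x_n - α^y_n)² ∈ [0,∞]`. -/
noncomputable def rho (x y : Set ℕ) : ℝ≥0∞ :=
  ∑' n : ℕ, ENNReal.ofReal ((alphaSeq x n - alphaSeq y n)^2)

/-- `F = {g ∈ [ω]^ω : ρ(g,ω) < ∞}`. -/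
def Fset : Set (Set ℕ) := {g | g.Infinite ∧ rho g Set.univ < ⊤}

/-- The monoid operation `x · y = (f_y ∘ f_x)[ω]`. -/
def dotOp (x y : Set ℕ) : Set ℕ := Set.range (fEnum y ∘ fEnum x)

/-- `IsKakutaniProduct x μ` says that `μ` is the product measure
`μ^x = ∏_n (α^x_n δ_0 + (1 - α^x_n) δ_1)` on Cantor space `2^ω = ℕ → Bool`
(identifying `0` with `false` and `1` with `true`), i.e. `μ` is the Borel
probability measure giving each finite cylinder the corresponding product of
the coordinate weights.  These conditions determine `μ^x` uniquely. -/
def IsKakutaniProduct (x : Set ℕ) (μ : Measure (ℕ → Bool)) : Prop :=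
  IsProbabilityMeasure μ ∧
    ∀ (s : Finset ℕ) (f : ℕ → Bool),
      μ {g | ∀ n ∈ s, g n = f n} =
        ∏ n ∈ s, (if f n = false then ENNReal.ofReal (alphaSeq x n)
                  else ENNReal.ofReal (1 - alphaSeq x n))

/-- The subset of `ℕ` coded by a point of Cantor space. -/
def toSet (f : ℕ → Bool) : Set ℕ := {n | f n = true}

/-!
`g ↦ α^g - α^ω` maps `F` injectively into `ℓ²`, with `‖α^g - α^h‖² = ρ(g,h)`, so `√ρ` is the
metric pulled back along this map and completeness amounts to its image being closed.
The `n`-th coordinate of `α^x` depends only on `x ∩ [0,n]`, so `x ↦ α^x` is continuous on Cantor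
space; its range is therefore compact, hence closed in `ℝ^ω`, and its preimage under the continuous
map `c ↦ c + α^ω` is closed in `ℓ²`. That preimage is exactly the image of `F`: if `α^x - α^ω` is
square summable then `x` is infinite, since for finite `x` the tail is `-1/(2√(n+1))`, whose squares
form a harmonic series.
-/

section AlphaSeq

variable {x y : Set ℕ} {n : ℕ}

lemma alphaSeq_of_mem [DecidablePred (· ∈ x)] (h : n ∈ x) :
    alphaSeq x n = 1/4 + 1/(2 * √((Nat.count (· ∈ x) n : ℝ) + 1)) := by
  unfold alphaSeq
  rw [if_pos h]
  congr

lemma alphaSeq_of_notMem (h : n ∉ x) : alphaSeq x n = 1/4 := by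
  unfold alphaSeq
  rw [if_neg h]

lemma alphaSeq_eq_quarter_iff : alphaSeq x n = 1/4 ↔ n ∉ x := by
  classical
  refine ⟨fun h hn => ?_, alphaSeq_of_notMem⟩
  rw [alphaSeq_of_mem hn] at h
  have : 0 < 1/(2 * √((Nat.count (· ∈ x) n : ℝ) + 1)) := by positivity
  linarith

lemma alphaSeq_injective : Function.Injective alphaSeq := fun x y h =>
  Set.ext fun n => by
    rw [← not_iff_not, ← alphaSeq_eq_quarter_iff, ← alphaSeq_eq_quarter_iff, h]

lemma alphaSeq_congr (h : ∀ j ≤ n, j ∈ x ↔ j ∈ y) : alphaSeq x n = alphaSeq y n := by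
  classical
  by_cases hn : n ∈ x
  · have hcount : Nat.count (· ∈ x) n = Nat.count (· ∈ y) n := by
      simp only [Nat.count_eq_card_filter_range]
      exact congrArg Finset.card <| Finset.filter_congr fun j hj =>
        h j (Finset.mem_range.1 hj).le
    rw [alphaSeq_of_mem hn, alphaSeq_of_mem ((h n le_rfl).1 hn), hcount]
  · rw [alphaSeq_of_notMem hn, alphaSeq_of_notMem (mt (h n le_rfl).2 hn)]

lemma alphaSeq_univ (n : ℕ) : alphaSeq univ n = 1/4 + 1/(2 * √((n : ℝ) + 1)) := by
  rw [alphaSeq_of_mem (mem_univ n)]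
  simp

lemma continuous_alphaSeq_toSet : Continuous fun f : ℕ → Bool => alphaSeq (toSet f) := by
  refine continuous_pi fun n => ?_
  have hfactor : (fun f : ℕ → Bool => alphaSeq (toSet f) n) =
      (fun r : Iic n → Bool => alphaSeq {j | ∃ hj : j ≤ n, r ⟨j, hj⟩} n) ∘ fun f j => f j := by
    funext f
    exact alphaSeq_congr fun j hj => by simp [toSet, hj]
  rw [hfactor]
  exact continuous_of_discreteTopology.comp (continuous_pi fun j => continuous_apply _)

lemma isClosed_range_alphaSeq : IsClosed (range alphaSeq) := by
  have hsurj : Function.Surjective toSet := fun x => by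
    classical
    exact ⟨fun n => decide (n ∈ x), by ext; simp [toSet]⟩
  rw [← hsurj.range_comp]
  exact (isCompact_range continuous_alphaSeq_toSet).isClosed

lemma infinite_of_summable_sq_alphaSeq_sub_univ
    (h : Summable fun n => (alphaSeq x n - alphaSeq univ n) ^ 2) : x.Infinite := by
  intro hfin
  have hterm : (fun n => (alphaSeq x n - alphaSeq univ n) ^ 2) =ᶠ[cofinite]
      fun n : ℕ => 4⁻¹ * (1 / ((n + 1 : ℕ) : ℝ)) := by
    filter_upwards [hfin.compl_mem_cofinite] with n hn
    have hsqrt : √((n : ℝ) + 1) ^ 2 = (n : ℝ) + 1 := Real.sq_sqrt (by positivity)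
    rw [alphaSeq_of_notMem hn, alphaSeq_univ]
    field_simp
    rw [hsqrt]
    push_cast
    ring
  have hharmonic := ((h.congr_cofinite hterm).mul_left 4).congr fun n => by
    rw [← mul_assoc, mul_inv_cancel₀ four_ne_zero, one_mul]
  exact Real.not_summable_one_div_natCast ((summable_nat_add_iff 1).1 hharmonic)

end AlphaSeq

lemma rho_toReal (x y : Set ℕ) :
    (rho x y).toReal = ∑' n, (alphaSeq x n - alphaSeq y n) ^ 2 := by
  rw [rho, ENNReal.tsum_toReal_eq fun _ => ENNReal.ofReal_ne_top]
  exact tsum_congr fun n => ENNReal.toReal_ofReal (sq_nonneg _)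

lemma rho_lt_top_iff {x y : Set ℕ} :
    rho x y < ⊤ ↔ Summable fun n => (alphaSeq x n - alphaSeq y n) ^ 2 := by
  constructor
  · intro h
    exact (ENNReal.summable_toReal h.ne).congr fun n => ENNReal.toReal_ofReal (sq_nonneg _)
  · intro h
    rw [rho, ← ENNReal.ofReal_tsum_of_nonneg (fun n => sq_nonneg _) h]
    exact ENNReal.ofReal_lt_top

lemma memℓp_two_iff_summable_sq {ι : Type*} {f : ι → ℝ} :
    Memℓp f 2 ↔ Summable fun i => f i ^ 2 := by
  rw [memℓp_gen_iff (by norm_num)]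
  simp [Real.norm_eq_abs, sq_abs]

lemma lp.norm_two_eq_sqrt_tsum_sq {ι : Type*} (f : lp (fun _ : ι => ℝ) 2) :
    ‖f‖ = √(∑' i, f i ^ 2) := by
  rw [← Real.sqrt_sq (norm_nonneg f), ← real_inner_self_eq_norm_sq, lp.inner_eq_tsum]
  simp [sq]

def Fset.toL2 (g : Fset) : lp (fun _ : ℕ => ℝ) 2 :=
  ⟨alphaSeq g - alphaSeq univ, memℓp_two_iff_summable_sq.2 (rho_lt_top_iff.1 g.2.2)⟩

@[simp]
lemma Fset.coe_toL2 (g : Fset) : ⇑(Fset.toL2 g) = alphaSeq g - alphaSeq univ := rfl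

lemma Fset.toL2_injective : Function.Injective Fset.toL2 := fun g h hgh =>
  Subtype.ext <| alphaSeq_injective <| by
    simpa using congrArg (fun c : lp (fun _ : ℕ => ℝ) 2 => ⇑c + alphaSeq univ) hgh

lemma Fset.dist_toL2 (g h : Fset) : dist (Fset.toL2 g) (Fset.toL2 h) = √(rho g h).toReal := by
  rw [dist_eq_norm, lp.norm_two_eq_sqrt_tsum_sq, rho_toReal]
  congr 1
  exact tsum_congr fun n => by
    simp only [lp.coeFn_sub, Pi.sub_apply, Fset.coe_toL2]
    ring

lemma Fset.range_toL2 :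
    range Fset.toL2 = (fun c : lp (fun _ : ℕ => ℝ) 2 => ⇑c + alphaSeq univ) ⁻¹' range alphaSeq := by
  ext c
  constructor
  · rintro ⟨g, rfl⟩
    exact ⟨g, by simp⟩
  · rintro ⟨x, hx⟩
    have hsum : Summable fun n => (alphaSeq x n - alphaSeq univ n) ^ 2 := by
      simpa [hx] using memℓp_two_iff_summable_sq.1 c.2
    refine ⟨⟨x, infinite_of_summable_sq_alphaSeq_sub_univ hsum, rho_lt_top_iff.2 hsum⟩, ?_⟩
    ext n
    simp [hx]

lemma Fset.isClosed_range_toL2 : IsClosed (range Fset.toL2) := by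
  rw [Fset.range_toL2]
  exact isClosed_range_alphaSeq.preimage
    ((lp.uniformContinuous_coe.continuous).add continuous_const)

/-- `(g,h) ↦ √(ρ(g,h))` is a complete metric on `F`. -/
theorem exists_complete_metric_sqrt_rho :
    ∃ m : MetricSpace {g : Set ℕ // g ∈ Fset},
      (∀ g h : {g : Set ℕ // g ∈ Fset},
        m.dist g h = Real.sqrt (rho g.1 h.1).toReal) ∧
      @CompleteSpace _ m.toUniformSpace := by
  let m := MetricSpace.induced Fset.toL2 Fset.toL2_injective inferInstance
  have hiso : Isometry Fset.toL2 := Isometry.of_dist_eq fun _ _ => rfl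
  refine ⟨m, Fset.dist_toL2, ?_⟩
  exact (completeSpace_iff_isComplete_range hiso.isUniformInducing).2
    Fset.isClosed_range_toL2.isComplete

end
end

section
/- Let x be an infinite set of natural numbers and y an infinite subset of x. If the complement of f_x⁻¹(y) in ω is not in the summable ideal, i.e., Σ_{n ∈ ω∖f_x⁻¹(y)} 1/(n+1) = ∞, then ρ(y,x) = ∞. -/
open MeasureTheory Filter Set
open scoped ENNReal

noncomputable section

theorem sq_alphaSeq_sub_alphaSeq_fEnum {x y : Set ℕ} (hx : x.Infinite) {k : ℕ}
    (hk : fEnum x k ∉ y) :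
    (alphaSeq y (fEnum x k) - alphaSeq x (fEnum x k)) ^ 2 = 1 / 4 * (1 / ((k : ℝ) + 1)) := by
  classical
  have hmem : fEnum x k ∈ x := Nat.nth_mem_of_infinite (p := (· ∈ x)) hx k
  simp only [alphaSeq, hmem, hk, if_true, if_false]
  rw [fEnum, Nat.count_nth_of_infinite (p := (· ∈ x)) hx k]
  field_simp
  rw [Real.sq_sqrt (by positivity)]
  ring

/-- Each index `k` outside `f_x⁻¹(y)` contributes `1/(4(k+1))` to `ρ(y,x)`, at the point
`f_x(k) ∈ x \ y`, where `α^y = 1/4` and `α^x = 1/4 + 1/(2√(k+1))`. -/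
theorem rho_eq_top_of_not_summable_general (x y : Set ℕ)
    (hx : x.Infinite)
    (h : (∑' n : {n : ℕ // fEnum x n ∉ y},
        ENNReal.ofReal (1 / (((n : ℕ) : ℝ) + 1))) = ⊤) :
    rho y x = ⊤ := by
  have hinj : Function.Injective (fun k : {n : ℕ // fEnum x n ∉ y} => fEnum x k) :=
    fun a b hab => Subtype.ext (Nat.nth_injective hx hab)
  refine top_le_iff.mp ?_
  calc ⊤ = ENNReal.ofReal (1 / 4) * ∑' k : {n : ℕ // fEnum x n ∉ y},
          ENNReal.ofReal (1 / ((k : ℕ) + 1)) := by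
        rw [h, ENNReal.mul_top (by norm_num)]
    _ = ∑' k : {n : ℕ // fEnum x n ∉ y},
          ENNReal.ofReal ((alphaSeq y (fEnum x k) - alphaSeq x (fEnum x k)) ^ 2) := by
        rw [← ENNReal.tsum_mul_left]
        refine tsum_congr fun k => ?_
        rw [sq_alphaSeq_sub_alphaSeq_fEnum hx k.2, ENNReal.ofReal_mul (by norm_num)]
    _ ≤ rho y x := ENNReal.tsum_comp_le_tsum_of_injective hinj _

/-- If `x ∈ [ω]^ω`, `y ∈ [x]^ω`, and the complement of `f_x⁻¹(y)` is not in the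
summable ideal, i.e. `Σ_{n ∉ f_x⁻¹(y)} 1/(n+1) = ∞`, then `ρ(y,x) = ∞`. -/
theorem rho_eq_top_of_not_summable (x y : Set ℕ)
    (hx : x.Infinite) (hy : y.Infinite) (hyx : y ⊆ x)
    (h : (∑' n : {n : ℕ // fEnum x n ∉ y},
        ENNReal.ofReal (1 / (((n : ℕ) : ℝ) + 1))) = ⊤) :
    rho y x = ⊤ :=
  rho_eq_top_of_not_summable_general x y hx h

end
end

section
/- Let x be an infinite set of natural numbers and let U be a nonempty open subset of [x]^ω (in the subspace topology from Cantor space). Then there is a nonempty perfect set P ⊆ U such that for all distinct y, z ∈ P the measures μ^y and μ^z are mutually singular. -/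
open MeasureTheory Filter Set
open scoped ENNReal

noncomputable section

/-! If `y` is infinite and `y ∩ z` is finite, then `∑ (α^y_n - α^z_n)²` diverges like the
harmonic series. Chebyshev's inequality for weighted counts of the zero coordinates over ever longer
finite blocks then yields events `B_k` with `∑ μ^z(B_k) < ∞` and `∑ μ^y(B_kᶜ) < ∞`, and
Borel–Cantelli makes `μ^y` and `μ^z` mutually singular.

It therefore suffices to find in `U` a perfect set of pairwise almost disjoint sets. Keep an initial
segment of a point `u ∈ U` and add, for each branch `a ∈ 2^ω`, the elements of `u` beyond that
segment indexed by the codes of the finite prefixes of `a`. Distinct branches share only finitely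
many prefixes, and the resulting map is a continuous injection of Cantor space into `U`. -/

open Function ProbabilityTheory Topology

section Topology

open PiNat

instance Pi.perfectSpace {ι : Type*} [Infinite ι] {X : ι → Type*} [∀ i, TopologicalSpace (X i)]
    [∀ i, Nontrivial (X i)] : PerfectSpace (∀ i, X i) := by
  classical
  refine perfectSpace_iff_forall_not_isolated.2 fun a => ?_
  choose b hb using fun i => exists_ne (a i)
  have hlim : Tendsto (fun i => update a i (b i)) cofinite (𝓝[≠] a) := by
    refine tendsto_nhdsWithin_iff.2 ⟨tendsto_pi_nhds.2 fun j => ?_, .of_forall fun i => ?_⟩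
    · refine tendsto_nhds_of_eventually_eq ?_
      filter_upwards [(finite_singleton j).eventually_cofinite_notMem] with i hi
      exact update_of_ne (Ne.symm hi) _ _
    · simpa using hb i
  exact hlim.neBot

theorem perfect_range_of_continuous_injective {X Y : Type*} [TopologicalSpace X]
    [TopologicalSpace Y] [CompactSpace X] [PerfectSpace X] [T2Space Y] {f : X → Y}
    (hf : Continuous f) (hinj : Injective f) : Perfect (range f) := by
  refine ⟨(isCompact_range hf).isClosed, ?_⟩
  rintro _ ⟨a, rfl⟩
  rw [accPt_iff_frequently]
  have hne := accPt_iff_frequently.1 (PerfectSpace.univ_preperfect a (mem_univ a))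
  exact hf.continuousAt.frequently (hne.mono fun b hb => ⟨hinj.ne hb.1, b, rfl⟩)

variable {E : ℕ → Type*} [∀ n, TopologicalSpace (E n)] [∀ n, DiscreteTopology (E n)]

theorem exists_cylinder_subset_of_isOpen {p : (∀ n, E n) → Prop} {U : Set (Subtype p)}
    (hU : IsOpen U) {u : Subtype p} (hu : u ∈ U) :
    ∃ N, ∀ f : Subtype p, f.1 ∈ PiNat.cylinder u.1 N → f ∈ U := by
  obtain ⟨V, hV, rfl⟩ := isOpen_induced_iff.1 hU
  obtain ⟨_, ⟨y, N, rfl⟩, huy, hyV⟩ :=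
    (isTopologicalBasis_cylinders E).exists_subset_of_mem_open hu hV
  rw [mem_cylinder_iff_eq] at huy
  exact ⟨N, fun f hf => hyV (huy ▸ hf)⟩

theorem continuous_of_forall_exists_cylinder {Y : Type*} [TopologicalSpace Y]
    {f : (∀ n, E n) → Y} (h : ∀ a, ∃ N, ∀ b ∈ PiNat.cylinder a N, f b = f a) :
    Continuous f := by
  refine continuous_iff_continuousAt.2 fun a => tendsto_nhds_of_eventually_eq ?_
  obtain ⟨N, hN⟩ := h a
  exact Filter.mem_of_superset ((isOpen_cylinder E a N).mem_nhds (self_mem_cylinder a N)) hN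

end Topology

section Chebyshev

variable {Ω : Type*} [MeasurableSpace Ω]

theorem MeasureTheory.Measure.mutuallySingular_of_tsum_ne_top {μ ν : Measure Ω}
    {B : ℕ → Set Ω} (hB : ∀ k, MeasurableSet (B k)) (hμ : ∑' k, μ (B k)ᶜ ≠ ∞)
    (hν : ∑' k, ν (B k) ≠ ∞) : μ ⟂ₘ ν := by
  refine ⟨limsup (fun k => (B k)ᶜ) atTop, .measurableSet_limsup fun k => (hB k).compl,
    measure_limsup_atTop_eq_zero hμ, measure_mono_null ?_ (measure_limsup_atTop_eq_zero hν)⟩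
  rw [limsup_compl]
  simpa only [comp_def, compl_compl] using liminf_le_limsup

theorem ProbabilityTheory.IndepSet.indepFun_indicator {μ : Measure Ω} {s t : Set Ω}
    (h : IndepSet s t μ) (c c' : ℝ) :
    IndepFun (s.indicator fun _ => c) (t.indicator fun _ => c') μ := by
  have hgen (u : Set Ω) := MeasurableSpace.measurableSet_generateFrom (mem_singleton u)
  exact Indep.indicator_indepFun c (hgen s)
    (indep_of_indep_of_le_right h (measurable_const.indicator (hgen t)).comap_le)

variable {ι : Type*} {μ : Measure Ω} [IsProbabilityMeasure μ] {E : ι → Set Ω}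

theorem measure_le_abs_sum_indicator_sub_le (hE : ∀ i, MeasurableSet (E i)) {s : Finset ι}
    (hind : (s : Set ι).Pairwise fun i j => IndepSet (E i) (E j) μ) (d : ι → ℝ) {c : ℝ}
    (hc : 0 < c) :
    μ {ω | c ≤ |∑ i ∈ s, (E i).indicator (fun _ => d i) ω - ∑ i ∈ s, d i * μ.real (E i)|}
      ≤ ENNReal.ofReal ((∑ i ∈ s, d i ^ 2) / 4 / c ^ 2) := by
  set X : ι → Ω → ℝ := fun i => (E i).indicator fun _ => d i
  have hX : ∀ i ∈ s, MemLp (X i) 2 μ := fun i _ =>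
    memLp_indicator_const 2 (hE i) (d i) (.inr (measure_ne_top μ _))
  have hmean : μ[∑ i ∈ s, X i] = ∑ i ∈ s, d i * μ.real (E i) := by
    simp only [Finset.sum_apply]
    rw [integral_finsetSum s fun i hi => (hX i hi).integrable one_le_two]
    exact Finset.sum_congr rfl fun i _ => by
      rw [integral_indicator_const _ (hE i), smul_eq_mul, mul_comm]
  have hvar : Var[∑ i ∈ s, X i; μ] ≤ (∑ i ∈ s, d i ^ 2) / 4 := by
    rw [IndepFun.variance_sum hX fun i hi j hj hij => (hind hi hj hij).indepFun_indicator _ _,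
      Finset.sum_div]
    refine Finset.sum_le_sum fun i _ => ?_
    have hbd : ∀ ω, X i ω ∈ Icc (min 0 (d i)) (max 0 (d i)) := fun ω => by
      by_cases hω : ω ∈ E i <;> simp [X, hω]
    calc Var[X i; μ] ≤ ((max 0 (d i) - min 0 (d i)) / 2) ^ 2 :=
          variance_le_sq_of_bounded (.of_forall hbd) (hX i ‹_›).aemeasurable
      _ = d i ^ 2 / 4 := by rw [max_sub_min_eq_abs', div_pow, sq_abs]; norm_num
  calc μ {ω | c ≤ |∑ i ∈ s, X i ω - ∑ i ∈ s, d i * μ.real (E i)|}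
      = μ {ω | c ≤ |(∑ i ∈ s, X i) ω - μ[∑ i ∈ s, X i]|} := by
        rw [hmean]; simp only [Finset.sum_apply]
    _ ≤ ENNReal.ofReal (Var[∑ i ∈ s, X i; μ] / c ^ 2) :=
        meas_ge_le_variance_div_sq (memLp_finsetSum' s hX) hc
    _ ≤ _ := ENNReal.ofReal_le_ofReal (by gcongr)

end Chebyshev

section Singularity

variable {Ω : Type*} [MeasurableSpace Ω] {μ ν : Measure Ω} [IsProbabilityMeasure μ]
  [IsProbabilityMeasure ν] {E : ℕ → Set Ω}

/-- The weighted count `S = ∑ (μ(E n) - ν(E n)) 𝟙_{E n}` has means that differ by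
`A = ∑ (μ(E n) - ν(E n))²` and variances at most `A / 4` under both measures, so the threshold
halfway between the means separates them up to Chebyshev's error `1 / A`. -/
theorem exists_measurableSet_separating (hE : ∀ n, MeasurableSet (E n))
    (hμ : Pairwise fun i j => IndepSet (E i) (E j) μ)
    (hν : Pairwise fun i j => IndepSet (E i) (E j) ν) (F : Finset ℕ)
    (hA : 0 < ∑ n ∈ F, (μ.real (E n) - ν.real (E n)) ^ 2) :
    ∃ B, MeasurableSet B ∧
      μ Bᶜ ≤ ENNReal.ofReal (∑ n ∈ F, (μ.real (E n) - ν.real (E n)) ^ 2)⁻¹ ∧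
      ν B ≤ ENNReal.ofReal (∑ n ∈ F, (μ.real (E n) - ν.real (E n)) ^ 2)⁻¹ := by
  set d : ℕ → ℝ := fun n => μ.real (E n) - ν.real (E n)
  set A := ∑ n ∈ F, d n ^ 2
  set S : Ω → ℝ := fun ω => ∑ n ∈ F, (E n).indicator (fun _ => d n) ω
  set mν := ∑ n ∈ F, d n * ν.real (E n)
  have hmμ : ∑ n ∈ F, d n * μ.real (E n) = mν + A := by
    simp only [mν, A, ← Finset.sum_add_distrib, sq]
    exact Finset.sum_congr rfl fun n _ => by ring
  have herr : A / 4 / (A / 2) ^ 2 = A⁻¹ := by field_simp; ring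
  have hS : Measurable S := Finset.measurable_sum _ fun n _ =>
    measurable_const.indicator (hE n)
  refine ⟨{ω | mν + A / 2 ≤ S ω}, measurableSet_le measurable_const hS, ?_, ?_⟩
  · refine (measure_mono fun ω hω => ?_).trans (herr ▸ measure_le_abs_sum_indicator_sub_le hE
      (hμ.set_pairwise _) d (half_pos hA))
    simp only [mem_compl_iff, mem_ofPred_eq, not_le] at hω ⊢
    rw [hmμ, abs_sub_comm]
    exact (le_abs_self _).trans' (by linarith)
  · refine (measure_mono fun ω hω => ?_).trans (herr ▸ measure_le_abs_sum_indicator_sub_le hE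
      (hν.set_pairwise _) d (half_pos hA))
    simp only [mem_ofPred_eq] at hω ⊢
    exact (le_abs_self _).trans' (by linarith)

/-- The easy half of Kakutani's dichotomy. -/
theorem mutuallySingular_of_not_summable_sq_sub (hE : ∀ n, MeasurableSet (E n))
    (hμ : Pairwise fun i j => IndepSet (E i) (E j) μ)
    (hν : Pairwise fun i j => IndepSet (E i) (E j) ν)
    (h : ¬ Summable fun n => (μ.real (E n) - ν.real (E n)) ^ 2) : μ ⟂ₘ ν := by
  have hF (k : ℕ) :
      ∃ F : Finset ℕ, (2 : ℝ) ^ k ≤ ∑ n ∈ F, (μ.real (E n) - ν.real (E n)) ^ 2 := by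
    by_contra! hk
    exact h (summable_of_sum_le (fun n => sq_nonneg _) fun F => (hk F).le)
  choose F hF using hF
  choose B hB hμB hνB using fun k =>
    exists_measurableSet_separating hE hμ hν (F k) ((pow_pos two_pos k).trans_le (hF k))
  have hbound : ∀ k, ENNReal.ofReal (∑ n ∈ F k, (μ.real (E n) - ν.real (E n)) ^ 2)⁻¹
      ≤ ENNReal.ofReal ((1 / 2) ^ k) := fun k => ENNReal.ofReal_le_ofReal (by
    rw [one_div, inv_pow]; exact inv_anti₀ (by positivity) (hF k))
  have hgeom : ∑' k : ℕ, ENNReal.ofReal ((1 / 2) ^ k) ≠ ∞ := by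
    rw [← ENNReal.ofReal_tsum_of_nonneg (fun k => by positivity) summable_geometric_two]
    exact ENNReal.ofReal_ne_top
  exact Measure.mutuallySingular_of_tsum_ne_top hB
    (ne_top_of_le_ne_top hgeom (ENNReal.tsum_le_tsum fun k => (hμB k).trans (hbound k)))
    (ne_top_of_le_ne_top hgeom (ENNReal.tsum_le_tsum fun k => (hνB k).trans (hbound k)))

end Singularity

section Kakutani

lemma alphaSeq_nonneg (x : Set ℕ) (n : ℕ) : 0 ≤ alphaSeq x n := by
  unfold alphaSeq; split_ifs <;> positivity

lemma sq_alphaSeq_sub_of_mem_of_notMem {Y Z : Set ℕ} [DecidablePred (· ∈ Y)] {n : ℕ}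
    (hY : n ∈ Y) (hZ : n ∉ Z) :
    (alphaSeq Y n - alphaSeq Z n) ^ 2 = 1 / (4 * ((Nat.count (· ∈ Y) n : ℝ) + 1)) := by
  -- `alphaSeq` counts with the instance `Classical.decPred`
  obtain rfl : ‹DecidablePred (· ∈ Y)› = Classical.decPred _ := Subsingleton.elim _ _
  simp only [alphaSeq, if_pos hY, if_neg hZ, add_sub_cancel_left, div_pow, mul_pow]
  rw [Real.sq_sqrt (by positivity)]
  norm_num

lemma not_summable_sq_alphaSeq_sub {Y Z : Set ℕ} (hY : Y.Infinite) (hYZ : (Y ∩ Z).Finite) :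
    ¬ Summable fun n => (alphaSeq Y n - alphaSeq Z n) ^ 2 := by
  classical
  intro hsum
  have hmem (j : ℕ) : Nat.nth (· ∈ Y) j ∈ Y := Nat.nth_mem_of_infinite (p := (· ∈ Y)) hY j
  have he : StrictMono (Nat.nth (· ∈ Y)) := Nat.nth_strictMono (p := (· ∈ Y)) hY
  have hfin : {j | Nat.nth (· ∈ Y) j ∈ Z}.Finite :=
    (hYZ.preimage he.injective.injOn).subset fun j hj => ⟨hmem j, hj⟩
  have hharm : Summable fun j : ℕ => 1 / (4 * ((j : ℝ) + 1)) := by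
    refine (hsum.comp_injective he.injective).of_norm_bounded_eventually ?_
    filter_upwards [hfin.eventually_cofinite_notMem] with j hj
    rw [comp_apply, sq_alphaSeq_sub_of_mem_of_notMem (hmem j) hj,
      Nat.count_nth_of_infinite (p := (· ∈ Y)) hY, Real.norm_of_nonneg (by positivity)]
  refine Real.not_summable_one_div_natCast
    ((summable_nat_add_iff 1).1 ((hharm.mul_left 4).congr fun j => ?_))
  push_cast
  field_simp

namespace IsKakutaniProduct

variable {w : Set ℕ} {μ : Measure (ℕ → Bool)}

lemma measurableSet_coord_false (n : ℕ) : MeasurableSet {g : ℕ → Bool | g n = false} :=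
  measurableSet_eq_fun (measurable_pi_apply n) measurable_const

lemma measure_coord_false (h : IsKakutaniProduct w μ) (n : ℕ) :
    μ {g | g n = false} = ENNReal.ofReal (alphaSeq w n) := by
  simpa using h.2 {n} fun _ => false

lemma measureReal_coord_false (h : IsKakutaniProduct w μ) (n : ℕ) :
    μ.real {g | g n = false} = alphaSeq w n := by
  rw [measureReal_def, h.measure_coord_false, ENNReal.toReal_ofReal (alphaSeq_nonneg w n)]

lemma indepSet_coord_false (h : IsKakutaniProduct w μ) {n m : ℕ} (hnm : n ≠ m) :
    IndepSet {g : ℕ → Bool | g n = false} {g | g m = false} μ := by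
  have := h.1
  rw [indepSet_iff_measure_inter_eq_mul (measurableSet_coord_false n)
    (measurableSet_coord_false m) μ, h.measure_coord_false, h.measure_coord_false]
  have := h.2 {n, m} fun _ => false
  simp only [Finset.mem_insert, Finset.mem_singleton, forall_eq_or_imp, forall_eq,
    Finset.prod_insert (Finset.notMem_singleton.2 hnm), Finset.prod_singleton] at this
  simpa [ofPred_and] using this

theorem mutuallySingular {Y Z : Set ℕ} {ν : Measure (ℕ → Bool)} (hμ : IsKakutaniProduct Y μ)
    (hν : IsKakutaniProduct Z ν) (hY : Y.Infinite) (hYZ : (Y ∩ Z).Finite) : μ ⟂ₘ ν := by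
  have := hμ.1
  have := hν.1
  refine mutuallySingular_of_not_summable_sq_sub measurableSet_coord_false
    (fun _ _ => hμ.indepSet_coord_false) (fun _ _ => hν.indepSet_coord_false) ?_
  simpa only [hμ.measureReal_coord_false, hν.measureReal_coord_false] using
    not_summable_sq_alphaSeq_sub hY hYZ

end IsKakutaniProduct

end Kakutani

section AlmostDisjoint

open Encodable PiNat

def branch (s : Set ℕ) (a : ℕ → Bool) : Set ℕ :=
  range fun n => Nat.nth (· ∈ s) (encode (res a n))

variable {s : Set ℕ}

lemma branch_subset (hs : s.Infinite) (a : ℕ → Bool) : branch s a ⊆ s :=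
  range_subset_iff.2 fun _ => Nat.nth_mem_of_infinite (p := (· ∈ s)) hs _

lemma eq_and_eqOn_of_nth_encode_res_eq (hs : s.Infinite) {a b : ℕ → Bool} {n m : ℕ}
    (h : Nat.nth (· ∈ s) (encode (res a n)) = Nat.nth (· ∈ s) (encode (res b m))) :
    n = m ∧ ∀ i < n, a i = b i := by
  have hres := encode_injective ((Nat.nth_strictMono (p := (· ∈ s)) hs).injective h)
  obtain rfl : n = m := by simpa using congrArg List.length hres
  exact ⟨rfl, fun i hi => res_eq_res.1 hres hi⟩

lemma branch_infinite (hs : s.Infinite) (a : ℕ → Bool) : (branch s a).Infinite :=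
  infinite_range_of_injective fun _ _ h => (eq_and_eqOn_of_nth_encode_res_eq hs h).1

lemma inter_branch_finite (hs : s.Infinite) {a b : ℕ → Bool} (hab : a ≠ b) :
    (branch s a ∩ branch s b).Finite := by
  obtain ⟨k, hk⟩ := ne_iff.1 hab
  refine ((finite_Iic k).image fun n => Nat.nth (· ∈ s) (encode (res a n))).subset ?_
  rintro _ ⟨⟨n, rfl⟩, m, hm⟩
  obtain ⟨rfl, hba⟩ := eq_and_eqOn_of_nth_encode_res_eq hs hm
  exact ⟨m, not_lt.1 fun hkm => hk (hba k hkm).symm, rfl⟩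

lemma mem_branch_of_mem_cylinder (hs : s.Infinite) {a b : ℕ → Bool} {m : ℕ}
    (hb : b ∈ cylinder a m) (hm : m ∈ branch s a) : m ∈ branch s b := by
  obtain ⟨n, rfl⟩ := hm
  have hn : n ≤ Nat.nth (· ∈ s) (encode (res a n)) := by
    simpa using (length_le_encode (res a n)).trans
      ((Nat.nth_strictMono (p := (· ∈ s)) hs).le_apply)
  exact ⟨n, by simp only [res_eq_res.2 fun i hi => hb i (hi.trans_le hn)]⟩

open scoped Classical in
lemma continuous_decide_mem_branch (hs : s.Infinite) :
    Continuous fun a (m : ℕ) => decide (m ∈ branch s a) :=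
  continuous_pi fun m => continuous_of_forall_exists_cylinder fun a =>
    ⟨m, fun b hb => decide_eq_decide.2
      ⟨mem_branch_of_mem_cylinder hs ((mem_cylinder_comm a b m).1 hb),
        mem_branch_of_mem_cylinder hs hb⟩⟩

theorem exists_continuous_almostDisjoint_family {u : ℕ → Bool} (hu : (toSet u).Infinite)
    (N : ℕ) :
    ∃ G : (ℕ → Bool) → ℕ → Bool, Continuous G ∧ (∀ a, G a ∈ cylinder u N) ∧
      (∀ a, toSet (G a) ⊆ toSet u) ∧ (∀ a, (toSet (G a)).Infinite) ∧
      Pairwise fun a b => (toSet (G a) ∩ toSet (G b)).Finite := by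
  classical
  set s := toSet u \ Iio N
  have hs : s.Infinite := hu.sdiff (finite_Iio N)
  set G : (ℕ → Bool) → ℕ → Bool := fun a m => if m < N then u m else decide (m ∈ branch s a)
  have hG (a : ℕ → Bool) : toSet (G a) = (toSet u ∩ Iio N) ∪ branch s a := by
    ext m
    by_cases hm : m < N
    · have : m ∉ branch s a := fun h => (branch_subset hs a h).2 hm
      simp [G, toSet, hm, this]
    · simp [G, toSet, hm]
  refine ⟨G, continuous_pi fun m => ?_, fun a i hi => if_pos hi, fun a => ?_, fun a => ?_,
    fun a b hab => ?_⟩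
  · by_cases hm : m < N
    · simpa [G, hm] using continuous_const
    · simpa [G, hm] using continuous_pi_iff.1 (continuous_decide_mem_branch hs) m
  · rw [hG]
    exact union_subset inter_subset_left ((branch_subset hs a).trans sdiff_subset)
  · rw [hG]
    exact (branch_infinite hs a).mono subset_union_right
  · simp only [hG, ← union_inter_distrib_left]
    exact ((finite_Iio N).subset inter_subset_right).union (inter_branch_finite hs hab)

end AlmostDisjoint

theorem perfect_orthogonal_family_in_open_general (μ : Set ℕ → Measure (ℕ → Bool))
    (hμ : ∀ w : Set ℕ, IsKakutaniProduct w (μ w))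
    (x : Set ℕ)
    (U : Set {f : ℕ → Bool // (toSet f).Infinite ∧ toSet f ⊆ x})
    (hU : IsOpen U) (hUne : U.Nonempty) :
    ∃ P ⊆ U, P.Nonempty ∧ Perfect P ∧
      ∀ y ∈ P, ∀ z ∈ P, y ≠ z →
        Measure.MutuallySingular (μ (toSet y.1)) (μ (toSet z.1)) := by
  obtain ⟨u, hu⟩ := hUne
  obtain ⟨N, hN⟩ := exists_cylinder_subset_of_isOpen hU hu
  obtain ⟨G, hGc, hGu, hGsub, hGinf, hGdisj⟩ := exists_continuous_almostDisjoint_family u.2.1 N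
  let Φ (a : ℕ → Bool) : {f : ℕ → Bool // (toSet f).Infinite ∧ toSet f ⊆ x} :=
    ⟨G a, hGinf a, (hGsub a).trans u.2.2⟩
  have hΦ : Injective Φ := fun a b hab => by
    by_contra hne
    have hGab : G a = G b := congrArg Subtype.val hab
    exact hGinf a (by simpa [hGab] using hGdisj hne)
  refine ⟨range Φ, range_subset_iff.2 fun a => hN _ (hGu a), range_nonempty Φ,
    perfect_range_of_continuous_injective (hGc.subtype_mk _) hΦ, ?_⟩
  rintro _ ⟨a, rfl⟩ _ ⟨b, rfl⟩ hab
  exact (hμ _).mutuallySingular (hμ _) (hGinf a) (hGdisj (ne_of_apply_ne Φ hab))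

/-- If `x ∈ [ω]^ω` and `U` is a nonempty open subset of `[x]^ω` (as a subspace
of Cantor space via characteristic functions), then there is a nonempty perfect
set `P ⊆ U` such that the measures `μ^y`, `y ∈ P`, are pairwise mutually
singular. -/
theorem perfect_orthogonal_family_in_open (μ : Set ℕ → Measure (ℕ → Bool))
    (hμ : ∀ w : Set ℕ, IsKakutaniProduct w (μ w))
    (x : Set ℕ) (hx : x.Infinite)
    (U : Set {f : ℕ → Bool // (toSet f).Infinite ∧ toSet f ⊆ x})
    (hU : IsOpen U) (hUne : U.Nonempty) :
    ∃ P ⊆ U, P.Nonempty ∧ Perfect P ∧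
      ∀ y ∈ P, ∀ z ∈ P, y ≠ z →
        Measure.MutuallySingular (μ (toSet y.1)) (μ (toSet z.1)) :=
  perfect_orthogonal_family_in_open_general μ hμ x U hU hUne

end
end
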